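/- Let A ∈ ℝ^{n×n} be such that every eigenvalue λ ∈ ℂ of A (i.e., of its complexification) satisfies |λ| < 1, let B ∈ ℝ^{n×m}, and let w be a random vector in ℝ^m with square-integrable coordinates, E[w] = 0, and finite covariance matrix Σ_w = E[w wᵀ]. Then there exist a symmetric positive definite matrix Q ∈ ℝ^{n×n} and a radius R ≥ 0 such that for every x ∈ ℝⁿ with ‖x‖ > R: E[(Ax + Bw)ᵀ Q (Ax + Bw)] ≤ xᵀ Q x. -/

import Mathlib

/-!
Since every eigenvalue of `A` lies in the open unit disc, Gelfand's formula gives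
`‖A ^ k‖ ≤ r ^ k` eventually for some `r < 1`, so `Q = ∑ₖ (Aᵏ)ᵀ Aᵏ` converges. It is positive
definite and solves the discrete Lyapunov equation `AᵀQA = Q - 1`. As `w` is centred, the cross
terms vanish in expectation and `E[(Ax + Bw)ᵀQ(Ax + Bw)] = xᵀQx - ‖x‖² + E[(Bw)ᵀQ(Bw)]`, which is
at most `xᵀQx` once `‖x‖²` exceeds the constant `E[(Bw)ᵀQ(Bw)]`.
-/

open Matrix MeasureTheory Filter
open scoped NNReal ENNReal

theorem spectrum.eventually_norm_pow_le_of_spectralRadius_lt {A : Type*} [NormedRing A]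
    [NormedAlgebra ℂ A] [CompleteSpace A] {a : A} {r : ℝ≥0} (h : spectralRadius ℂ a < r) :
    ∀ᶠ k : ℕ in atTop, ‖a ^ k‖ ≤ r ^ k := by
  filter_upwards [(pow_nnnorm_pow_one_div_tendsto_nhds_spectralRadius a).eventually_lt_const h,
    eventually_ne_atTop 0] with k hk hk0
  have hk_pos : (0 : ℝ) < k := by positivity
  have := ENNReal.rpow_lt_rpow hk hk_pos
  rw [← ENNReal.rpow_mul, one_div_mul_cancel hk_pos.ne', ENNReal.rpow_one,
    ENNReal.rpow_natCast] at this
  exact_mod_cast this.le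

-- Any norm would do: `spectralRadius` does not depend on it.
open scoped Matrix.Norms.Frobenius in
theorem Matrix.spectralRadius_lt_one_of_forall_hasEigenvalue {ι : Type*} [Fintype ι] [DecidableEq ι]
    {M : Matrix ι ι ℂ} (h : ∀ z, Module.End.HasEigenvalue (toLin' M) z → ‖z‖ < 1) :
    spectralRadius ℂ M < 1 := by
  rcases (spectrum ℂ M).eq_empty_or_nonempty with hempty | hne
  · simp [spectralRadius, hempty]
  · refine spectrum.spectralRadius_lt_of_forall_lt_of_nonempty hne fun z hz => ?_
    rw [← Matrix.spectrum_toLin', ← Module.End.hasEigenvalue_iff_mem_spectrum] at hz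
    exact_mod_cast h z hz

-- The Frobenius norm is submultiplicative and invariant under `ᵀ` and under `map Complex.ofReal`.
open scoped Matrix.Norms.Frobenius in
theorem Matrix.summable_transpose_pow_mul_pow {ι : Type*} [Fintype ι] [DecidableEq ι]
    {A : Matrix ι ι ℝ}
    (hA : ∀ z, Module.End.HasEigenvalue (toLin' (A.map Complex.ofReal)) z → ‖z‖ < 1) :
    Summable fun k : ℕ => (A ^ k)ᵀ * A ^ k := by
  obtain ⟨r, hρr, hr⟩ := ENNReal.lt_iff_exists_nnreal_btwn.mp
    (spectralRadius_lt_one_of_forall_hasEigenvalue hA)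
  have hr1 : (r : ℝ) < 1 := by exact_mod_cast hr
  have hnorm : ∀ k : ℕ, ‖(A.map Complex.ofReal) ^ k‖ = ‖A ^ k‖ := fun k => by
    rw [show A.map Complex.ofReal ^ k = (A ^ k).map Complex.ofReal from
      (map_pow Complex.ofRealHom.mapMatrix A k).symm]
    exact frobenius_norm_map_eq _ _ Complex.norm_real
  refine Summable.of_norm_bounded_eventually_nat
    (summable_geometric_of_lt_one (by positivity) (pow_lt_one₀ r.2 hr1 two_ne_zero)) ?_
  filter_upwards [spectrum.eventually_norm_pow_le_of_spectralRadius_lt hρr] with k hk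
  rw [hnorm] at hk
  calc ‖(A ^ k)ᵀ * A ^ k‖ ≤ ‖(A ^ k)ᵀ‖ * ‖A ^ k‖ := norm_mul_le _ _
    _ = ‖A ^ k‖ ^ 2 := by rw [frobenius_norm_transpose, sq]
    _ ≤ ((r : ℝ) ^ k) ^ 2 := by gcongr
    _ = ((r : ℝ) ^ 2) ^ k := by ring

theorem Matrix.hasSum_dotProduct_mulVec {ι β R : Type*} [Fintype ι] [CommRing R]
    [TopologicalSpace R] [IsTopologicalRing R] {f : β → Matrix ι ι R} {M : Matrix ι ι R}
    (hf : HasSum f M) (x y : ι → R) :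
    HasSum (fun k => x ⬝ᵥ f k *ᵥ y) (x ⬝ᵥ M *ᵥ y) :=
  hf.map (AddMonoidHom.mk' (fun N : Matrix ι ι R => x ⬝ᵥ N *ᵥ y)
    fun N N' => by simp only [add_mulVec, dotProduct_add])
    (continuous_const.dotProduct (continuous_id.matrix_mulVec continuous_const))

namespace Matrix

variable {ι : Type*} [Fintype ι] [DecidableEq ι] {A : Matrix ι ι ℝ}

noncomputable def lyapunovSolution (A : Matrix ι ι ℝ) : Matrix ι ι ℝ :=
  ∑' k : ℕ, (A ^ k)ᵀ * A ^ k

theorem transpose_mul_lyapunovSolution_mul (hA : Summable fun k : ℕ => (A ^ k)ᵀ * A ^ k) :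
    Aᵀ * lyapunovSolution A * A = lyapunovSolution A - 1 := by
  have hshift : ∀ k : ℕ, Aᵀ * ((A ^ k)ᵀ * A ^ k) * A = (A ^ (k + 1))ᵀ * A ^ (k + 1) := fun k => by
    simp only [pow_succ, transpose_mul, Matrix.mul_assoc]
  rw [lyapunovSolution, ← hA.tsum_mul_left, ← (hA.mul_left _).tsum_mul_right]
  simp only [hshift]
  rw [hA.tsum_eq_zero_add]
  simp

theorem posDef_lyapunovSolution (hA : Summable fun k : ℕ => (A ^ k)ᵀ * A ^ k) :
    (lyapunovSolution A).PosDef := by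
  refine .of_dotProduct_mulVec_pos ?_ fun x hx => ?_
  · rw [IsHermitian, conjTranspose_eq_transpose_of_trivial, lyapunovSolution, transpose_tsum]
    simp
  · rw [star_trivial]
    have hterm : ∀ k : ℕ, x ⬝ᵥ ((A ^ k)ᵀ * A ^ k) *ᵥ x = (A ^ k *ᵥ x) ⬝ᵥ (A ^ k *ᵥ x) := fun k => by
      rw [← mulVec_mulVec, dotProduct_mulVec, vecMul_transpose]
    calc 0 < x ⬝ᵥ x := by simpa using dotProduct_star_self_pos_iff.mpr hx
      _ = x ⬝ᵥ ((A ^ 0)ᵀ * A ^ 0) *ᵥ x := by simp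
      _ ≤ x ⬝ᵥ lyapunovSolution A *ᵥ x :=
        le_hasSum (hasSum_dotProduct_mulVec hA.hasSum x x) 0 fun k _ => by
          rw [hterm]; simpa using dotProduct_star_self_nonneg (A ^ k *ᵥ x)

end Matrix

section RandomVector

variable {Ω κ : Type*} [MeasurableSpace Ω] {μ : Measure Ω} [Fintype κ] {w : Ω → κ → ℝ}

theorem memLp_dotProduct {p : ℝ≥0∞} (hw : ∀ i, MemLp (fun ω => w ω i) p μ) (v : κ → ℝ) :
    MemLp (fun ω => v ⬝ᵥ w ω) p μ := by
  simpa only [dotProduct] using memLp_finsetSum _ fun i _ => (hw i).const_mul (v i)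

theorem integral_dotProduct (hw : ∀ i, Integrable (fun ω => w ω i) μ) (v : κ → ℝ) :
    ∫ ω, v ⬝ᵥ w ω ∂μ = v ⬝ᵥ fun i => ∫ ω, w ω i ∂μ := by
  simp only [dotProduct]
  rw [integral_finsetSum _ fun i _ => (hw i).const_mul (v i)]
  simp only [integral_const_mul]

theorem integrable_dotProduct_mulVec (hw : ∀ i, MemLp (fun ω => w ω i) 2 μ) (M : Matrix κ κ ℝ) :
    Integrable (fun ω => w ω ⬝ᵥ M *ᵥ w ω) μ := by
  simp only [dotProduct, mulVec, Finset.mul_sum]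
  exact integrable_finsetSum _ fun i _ => integrable_finsetSum _ fun j _ => by
    simpa only [Pi.mul_apply, mul_left_comm] using ((hw i).integrable_mul (hw j)).const_mul (M i j)

theorem integral_add_dotProduct_mulVec [IsProbabilityMeasure μ]
    (hw : ∀ i, MemLp (fun ω => w ω i) 2 μ) (hmean : ∀ i, ∫ ω, w ω i ∂μ = 0)
    (M : Matrix κ κ ℝ) (y : κ → ℝ) :
    ∫ ω, (y + w ω) ⬝ᵥ M *ᵥ (y + w ω) ∂μ = y ⬝ᵥ M *ᵥ y + ∫ ω, w ω ⬝ᵥ M *ᵥ w ω ∂μ := by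
  have hlin : ∀ v, ∫ ω, v ⬝ᵥ w ω ∂μ = 0 := fun v => by
    rw [integral_dotProduct fun i => (hw i).integrable one_le_two]
    simp [hmean]
  have hexpand : ∀ ω, (y + w ω) ⬝ᵥ M *ᵥ (y + w ω)
      = y ⬝ᵥ M *ᵥ y + ((y ᵥ* M) ⬝ᵥ w ω + (M *ᵥ y) ⬝ᵥ w ω) + w ω ⬝ᵥ M *ᵥ w ω := fun ω => by
    rw [mulVec_add, dotProduct_add, add_dotProduct, add_dotProduct, dotProduct_mulVec y M (w ω),
      dotProduct_comm (w ω) (M *ᵥ y)]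
    ring
  have hv : ∀ v, Integrable (fun ω => v ⬝ᵥ w ω) μ := fun v =>
    (memLp_dotProduct hw v).integrable one_le_two
  have hcross : Integrable (fun ω => (y ᵥ* M) ⬝ᵥ w ω + (M *ᵥ y) ⬝ᵥ w ω) μ := (hv _).add (hv _)
  have hlinear : Integrable (fun ω => y ⬝ᵥ M *ᵥ y + ((y ᵥ* M) ⬝ᵥ w ω + (M *ᵥ y) ⬝ᵥ w ω)) μ :=
    (integrable_const _).add hcross
  simp only [hexpand]
  rw [integral_add hlinear (integrable_dotProduct_mulVec hw M),
    integral_add (integrable_const _) hcross, integral_add (hv _) (hv _), hlin, hlin]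
  simp

end RandomVector

theorem stable_linear_quadratic_drift_general {n m : ℕ} (A : Matrix (Fin n) (Fin n) ℝ)
    (hA : ∀ lam : ℂ,
      Module.End.HasEigenvalue (Matrix.toLin' (A.map (Complex.ofReal))) lam → ‖lam‖ < 1)
    (B : Matrix (Fin n) (Fin m) ℝ)
    {Ω : Type*} [MeasurableSpace Ω] (μ : Measure Ω) [IsProbabilityMeasure μ]
    (w : Ω → Fin m → ℝ)
    (hL2 : ∀ i, MemLp (fun ω => w ω i) 2 μ)
    (hmean : ∀ i, ∫ ω, w ω i ∂μ = 0) :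
    ∃ (Q : Matrix (Fin n) (Fin n) ℝ) (R : ℝ), Q.PosDef ∧ 0 ≤ R ∧
      ∀ x : Fin n → ℝ, R < Real.sqrt (x ⬝ᵥ x) →
        ∫ ω, (A.mulVec x + B.mulVec (w ω)) ⬝ᵥ Q.mulVec (A.mulVec x + B.mulVec (w ω)) ∂μ ≤
          x ⬝ᵥ Q.mulVec x := by
  have hS := summable_transpose_pow_mul_pow hA
  set Q := lyapunovSolution A
  set c := ∫ ω, B *ᵥ w ω ⬝ᵥ Q *ᵥ B *ᵥ w ω ∂μ
  refine ⟨Q, √(max c 0), posDef_lyapunovSolution hS, Real.sqrt_nonneg _, fun x hx => ?_⟩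
  have hBw : ∀ i, MemLp (fun ω => (B *ᵥ w ω) i) 2 μ := fun i => memLp_dotProduct hL2 (B i)
  have hBw_mean : ∀ i, ∫ ω, (B *ᵥ w ω) i ∂μ = 0 := fun i => by
    change ∫ ω, B i ⬝ᵥ w ω ∂μ = 0
    rw [integral_dotProduct fun j => (hL2 j).integrable one_le_two]
    simp [hmean]
  have hLyapunov : Aᵀ * Q * A = Q - 1 := transpose_mul_lyapunovSolution_mul hS
  have hQ_decay : A *ᵥ x ⬝ᵥ Q *ᵥ A *ᵥ x = x ⬝ᵥ Q *ᵥ x - x ⬝ᵥ x :=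
    calc A *ᵥ x ⬝ᵥ Q *ᵥ A *ᵥ x = x ⬝ᵥ (Aᵀ * Q * A) *ᵥ x := by
          rw [← mulVec_mulVec, ← mulVec_mulVec, dotProduct_mulVec x, vecMul_transpose]
      _ = x ⬝ᵥ Q *ᵥ x - x ⬝ᵥ x := by rw [hLyapunov, sub_mulVec, one_mulVec, dotProduct_sub]
  have hc : c ≤ x ⬝ᵥ x :=
    (le_max_left _ _).trans ((Real.sqrt_lt_sqrt_iff (le_max_right _ _)).mp hx).le
  rw [integral_add_dotProduct_mulVec hBw hBw_mean, hQ_decay]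
  linarith

/-- A strictly stable linear stochastic system `x⁺ = Ax + Bw` (all complex eigenvalues of
`A` of modulus `< 1`, `w` zero-mean square-integrable with covariance `Sw`) admits a
quadratic drift function `V(x) = xᵀQx` satisfying the drift criterion V1 outside a ball:
`E[V(Ax+Bw)] ≤ V(x)` for all `‖x‖ > R`. -/
theorem stable_linear_quadratic_drift {n m : ℕ} (A : Matrix (Fin n) (Fin n) ℝ)
    (hA : ∀ lam : ℂ,
      Module.End.HasEigenvalue (Matrix.toLin' (A.map (Complex.ofReal))) lam → ‖lam‖ < 1)
    (B : Matrix (Fin n) (Fin m) ℝ)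
    {Ω : Type*} [MeasurableSpace Ω] (μ : Measure Ω) [IsProbabilityMeasure μ]
    (w : Ω → Fin m → ℝ) (hmeas : Measurable w)
    (hL2 : ∀ i, MemLp (fun ω => w ω i) 2 μ)
    (hmean : ∀ i, ∫ ω, w ω i ∂μ = 0)
    (Sw : Matrix (Fin m) (Fin m) ℝ)
    (hcov : ∀ i j, ∫ ω, w ω i * w ω j ∂μ = Sw i j) :
    ∃ (Q : Matrix (Fin n) (Fin n) ℝ) (R : ℝ), Q.PosDef ∧ 0 ≤ R ∧
      ∀ x : Fin n → ℝ, R < Real.sqrt (x ⬝ᵥ x) →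
        ∫ ω, (A.mulVec x + B.mulVec (w ω)) ⬝ᵥ Q.mulVec (A.mulVec x + B.mulVec (w ω)) ∂μ ≤
          x ⬝ᵥ Q.mulVec x :=
  stable_linear_quadratic_drift_general A hA B μ w hL2 hmean
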